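/- arXiv:2105.06124 — 5 statements merged into one kernel-verified Lean document; each statement's English description precedes it below -/
import Mathlib

section
/- Suppose there are n worker nodes, each of which independently belongs to the slow class with probability p̂ and to the active class with probability 1−p̂ (classes fixed for the whole experiment). In each of L iterations, a uniformly random permutation (independent across iterations and independent of the class assignment) assigns a set of s distinct workers to a data-set D; each assigned worker then straggles with probability p_ss if slow and p_as if active, independently across workers and across iterations. Say D is 'not accessed' in an iteration if all s workers assigned to it in that iteration straggle. Then the expected number of iterations (out of L) in which D is not accessed equals L · (p̂·p_ss + (1−p̂)·p_as)^s. -/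
/-!
Sum out the straggling pattern first: in a fixed iteration, the weights of all other
iterations and of all unassigned workers marginalize to one, so the probability that the
`s` assigned workers all straggle is the product of their straggling probabilities. Summing
this over the independent classes, each of the `s` distinct assigned workers contributes
`p̂ p_ss + (1 - p̂) p_as`, whatever the permutation; the permutation weights then sum to one,
and linearity of expectation over the `L` iterations gives the factor `L`.
-/

open Finset

theorem sum_prod_mul_prod_of_sum_eq_one {ι α R : Type*} [Fintype ι] [DecidableEq ι] [Fintype α]
    [CommSemiring R] (w : ι → α → R) (hw : ∀ i, ∑ a, w i a = 1) (S : Finset ι)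
    (h : ι → α → R) :
    ∑ g : ι → α, (∏ i, w i (g i)) * ∏ i ∈ S, h i (g i) = ∏ i ∈ S, ∑ a, w i a * h i a := by
  calc ∑ g : ι → α, (∏ i, w i (g i)) * ∏ i ∈ S, h i (g i)
      = ∑ g : ι → α, ∏ i, w i (g i) * (if i ∈ S then h i (g i) else 1) := by
        simp_rw [prod_mul_distrib, Fintype.prod_ite_mem]
    _ = ∏ i, ∑ a, w i a * (if i ∈ S then h i a else 1) :=
        (Fintype.prod_sum (κ := fun _ => α) fun i a => w i a * if i ∈ S then h i a else 1).symm
    _ = ∏ i, if i ∈ S then ∑ a, w i a * h i a else 1 := by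
        refine prod_congr rfl fun i _ => ?_
        split_ifs <;> simp [hw]
    _ = ∏ i ∈ S, ∑ a, w i a * h i a := Fintype.prod_ite_mem S _

theorem sum_mul_card_filter {β κ R : Type*} [Fintype β] [Fintype κ] [NonAssocSemiring R]
    (w : β → R) (P : β → κ → Prop) [∀ x, DecidablePred (P x)] :
    ∑ x, w x * (#{ℓ | P x ℓ} : R) = ∑ ℓ, ∑ x, w x * if P x ℓ then 1 else 0 := by
  simp_rw [card_filter, Nat.cast_sum, Nat.cast_ite, Nat.cast_one, Nat.cast_zero, mul_sum]
  exact sum_comm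

section Bernoulli

variable {ι κ R : Type*} [Fintype ι] [DecidableEq ι] [CommRing R]

theorem sum_bool_ite_one_sub (p : R) : ∑ b : Bool, (if b then p else 1 - p) = 1 := by
  simp

theorem sum_prod_bernoulli_mul_prod_ite (p a b : R) (S : Finset ι) :
    ∑ c : ι → Bool, (∏ i, if c i then p else 1 - p) * ∏ i ∈ S, (if c i then a else b)
      = (p * a + (1 - p) * b) ^ #S := by
  rw [sum_prod_mul_prod_of_sum_eq_one _ (fun _ => sum_bool_ite_one_sub p) S
    fun _ c => if c then a else b, prod_const]
  simp

theorem sum_prod_prod_bernoulli_mul_prod_boole [Fintype κ] [DecidableEq κ] (q : ι → R) (ℓ : κ)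
    (S : Finset ι) :
    ∑ ω : κ → ι → Bool, (∏ ℓ', ∏ i, if ω ℓ' i then q i else 1 - q i)
        * ∏ i ∈ S, (if ω ℓ i then 1 else 0) = ∏ i ∈ S, q i := by
  have hq (i : ι) := sum_bool_ite_one_sub (q i)
  have hw (_ : κ) : ∑ g : ι → Bool, ∏ i, (if g i then q i else 1 - q i) = 1 := by
    simpa using sum_prod_mul_prod_of_sum_eq_one _ hq ∅ fun _ _ => (1 : R)
  have hmarginal := sum_prod_mul_prod_of_sum_eq_one _ hw {ℓ}
    fun _ g => ∏ i ∈ S, if g i then (1 : R) else 0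
  simp only [prod_singleton] at hmarginal
  rw [hmarginal, sum_prod_mul_prod_of_sum_eq_one _ hq S fun _ b => if b then 1 else 0]
  simp

end Bernoulli

theorem ite_forall_val_lt_eq_prod_map {R : Type*} [CommMonoidWithZero R] {n : ℕ} (s : ℕ)
    (σ : Equiv.Perm (Fin n)) (g : Fin n → Bool) :
    (if ∀ i : Fin n, (i : ℕ) < s → g (σ i) = true then (1 : R) else 0)
      = ∏ j ∈ ({i | (i : ℕ) < s} : Finset (Fin n)).map σ.toEmbedding, if g j then 1 else 0 := by
  rw [prod_map, prod_boole]
  simp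

theorem expected_not_accessed_shuffling_general
    (L n s : ℕ) (hs : s ≤ n) (phat p_ss p_as : ℝ) :
    ∑ c : Fin n → Bool, ∑ π : Fin L → Equiv.Perm (Fin n),
      ∑ ω : Fin L → Fin n → Bool,
      ((∏ i : Fin n, (if c i then phat else 1 - phat)) *
        ((n.factorial : ℝ)⁻¹) ^ L *
        (∏ ℓ : Fin L, ∏ i : Fin n,
          (if ω ℓ i then (if c i then p_ss else p_as)
           else 1 - (if c i then p_ss else p_as)))) *
      ((Finset.univ.filter
          (fun ℓ : Fin L =>
            ∀ i : Fin n, (i : ℕ) < s → ω ℓ (π ℓ i) = true)).card : ℝ)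
    = (L : ℝ) * (phat * p_ss + (1 - phat) * p_as) ^ s := by
  set W : (Fin n → Bool) → ℝ := fun c => ∏ i : Fin n, if c i then phat else 1 - phat
  set u : ℝ := ((n.factorial : ℝ)⁻¹) ^ L
  set A : Equiv.Perm (Fin n) → Finset (Fin n) :=
    fun σ => ({i | (i : ℕ) < s} : Finset (Fin n)).map σ.toEmbedding
  calc _ = ∑ c : Fin n → Bool, ∑ π : Fin L → Equiv.Perm (Fin n),
          W c * u * ∑ ℓ, ∏ j ∈ A (π ℓ), if c j then p_ss else p_as := by
        refine sum_congr rfl fun c _ => sum_congr rfl fun π _ => ?_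
        rw [sum_mul_card_filter, mul_sum]
        refine sum_congr rfl fun ℓ _ => ?_
        simp_rw [ite_forall_val_lt_eq_prod_map, mul_assoc, ← mul_sum,
          sum_prod_prod_bernoulli_mul_prod_boole]
        rfl
    _ = ∑ π : Fin L → Equiv.Perm (Fin n), u * ∑ ℓ, ∑ c : Fin n → Bool,
          W c * ∏ j ∈ A (π ℓ), if c j then p_ss else p_as := by
        rw [sum_comm]
        refine sum_congr rfl fun π _ => ?_
        simp_rw [mul_sum]
        rw [sum_comm]
        exact sum_congr rfl fun ℓ _ => sum_congr rfl fun c _ => by ring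
    _ = ∑ π : Fin L → Equiv.Perm (Fin n), u * (L * (phat * p_ss + (1 - phat) * p_as) ^ s) := by
        simp only [W, A, sum_prod_bernoulli_mul_prod_ite, card_map, Fin.card_filter_val_lt,
          min_eq_right hs, sum_const, card_univ, Fintype.card_fin, nsmul_eq_mul]
    _ = L * (phat * p_ss + (1 - phat) * p_as) ^ s := by
        have hfact : (n.factorial : ℝ) ≠ 0 := by positivity
        simp only [u, inv_pow, sum_const, card_univ, Fintype.card_pi, Fintype.card_perm,
          Fintype.card_fin, prod_const, nsmul_eq_mul, Nat.cast_pow]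
        field_simp

theorem expected_not_accessed_shuffling
    (L n s : ℕ) (hs : s ≤ n) (phat p_ss p_as : ℝ)
    (hp0 : 0 ≤ phat) (hp1 : phat ≤ 1)
    (hss0 : 0 ≤ p_ss) (hss1 : p_ss ≤ 1) (has0 : 0 ≤ p_as) (has1 : p_as ≤ 1) :
    ∑ c : Fin n → Bool, ∑ π : Fin L → Equiv.Perm (Fin n),
      ∑ ω : Fin L → Fin n → Bool,
      ((∏ i : Fin n, (if c i then phat else 1 - phat)) *
        ((n.factorial : ℝ)⁻¹) ^ L *
        (∏ ℓ : Fin L, ∏ i : Fin n,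
          (if ω ℓ i then (if c i then p_ss else p_as)
           else 1 - (if c i then p_ss else p_as)))) *
      ((Finset.univ.filter
          (fun ℓ : Fin L =>
            ∀ i : Fin n, (i : ℕ) < s → ω ℓ (π ℓ i) = true)).card : ℝ)
    = (L : ℝ) * (phat * p_ss + (1 - phat) * p_as) ^ s :=
  expected_not_accessed_shuffling_general L n s hs phat p_ss p_as
end

section
/- Let n = k·s for positive integers k, s, and let B ∈ ℝ^{n×n} be the FRC encoding matrix, i.e., the block-diagonal matrix with k diagonal blocks each equal to the s×s all-ones matrix. For a subset S ⊆ {1,…,n} with |S| = r, let A_S denote the n×r submatrix of B formed by the columns indexed by S, and define err(A_S) := min over x ∈ ℝ^r of ‖A_S x − 1_n‖₂², where 1_n is the all-ones vector of length n. If S is chosen uniformly at random among all subsets of {1,…,n} of size r, then E[err(A_S)] = n · C(n−s, r) / C(n, r). -/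
/-- The FRC encoding matrix for `n = k·s` workers: block-diagonal with `k`
diagonal blocks each equal to the `s × s` all-ones matrix, i.e.
`B i j = 1` iff rows `i` and columns `j` lie in the same block `⌊·/s⌋`. -/
noncomputable def frcMatrix (n s : ℕ) : Fin n → Fin n → ℝ :=
  fun i j => if (i : ℕ) / s = (j : ℕ) / s then 1 else 0

/-- The optimal decoding error of the submatrix of `B` formed by the columns
indexed by `S`:  `err(A_S) = min_{x ∈ ℝ^{|S|}} ‖A_S x − 1_n‖₂²`. -/
noncomputable def errSub {n : ℕ} (B : Fin n → Fin n → ℝ) (S : Finset (Fin n)) : ℝ :=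
  sInf {e : ℝ | ∃ x : Fin n → ℝ,
    e = ∑ i : Fin n, ((∑ j ∈ S, x j * B i j) - 1) ^ 2}

/-!
For a block matrix `B i j = [f i = f j]`, the residual in row `i` only sees the selected columns of
the block of `i`. A row whose block contains no selected column has residual `-1` whatever `x` is,
while giving each selected column weight `1 / (number of selected columns in its block)` fits every
other row exactly; so `err(A_S)` is the number of uncovered rows. Summing over `S` and counting the
other way round, row `i` is uncovered by exactly the `r`-sets avoiding its block, of which there are
`C(n - s, r)` for the FRC matrix.
-/

open Finset

section BlockMatrix

variable {n : ℕ} {β : Type*} [DecidableEq β] (f : Fin n → β)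

def blockMatrix : Fin n → Fin n → ℝ := fun i j => if f i = f j then 1 else 0

def uncoveredRows (S : Finset (Fin n)) : Finset (Fin n) := {i | ∀ j ∈ S, f j ≠ f i}

variable {f}

lemma sum_mul_blockMatrix (S : Finset (Fin n)) (y : Fin n → ℝ) (i : Fin n) :
    ∑ j ∈ S, y j * blockMatrix f i j = ∑ j ∈ S with f j = f i, y j := by
  simp [blockMatrix, sum_filter, eq_comm]

lemma card_uncoveredRows_le (S : Finset (Fin n)) (y : Fin n → ℝ) :
    (#(uncoveredRows f S) : ℝ) ≤ ∑ i, ((∑ j ∈ S, y j * blockMatrix f i j) - 1) ^ 2 := by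
  have hmissed : ∀ i ∈ uncoveredRows f S, ((∑ j ∈ S, y j * blockMatrix f i j) - 1) ^ 2 = 1 := by
    intro i hi
    simp only [uncoveredRows, mem_filter, mem_univ, true_and] at hi
    rw [sum_mul_blockMatrix, filter_false_of_mem hi, sum_empty]
    norm_num
  calc (#(uncoveredRows f S) : ℝ)
      = ∑ i ∈ uncoveredRows f S, ((∑ j ∈ S, y j * blockMatrix f i j) - 1) ^ 2 := by
        rw [sum_congr rfl hmissed, sum_const, nsmul_one]
    _ ≤ _ := sum_le_sum_of_subset_of_nonneg (subset_univ _) fun _ _ _ => sq_nonneg _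

lemma exists_eq_card_uncoveredRows (S : Finset (Fin n)) :
    ∃ x : Fin n → ℝ,
      ∑ i, ((∑ j ∈ S, x j * blockMatrix f i j) - 1) ^ 2 = (#(uncoveredRows f S) : ℝ) := by
  refine ⟨fun j => (#{j' ∈ S | f j' = f j} : ℝ)⁻¹, ?_⟩
  rw [uncoveredRows, card_filter, Nat.cast_sum]
  refine sum_congr rfl fun i _ => ?_
  rw [sum_mul_blockMatrix]
  set T := {j ∈ S | f j = f i}
  have hT : ∀ j ∈ T, (#{j' ∈ S | f j' = f j} : ℝ)⁻¹ = (#T : ℝ)⁻¹ := by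
    intro j hj
    rw [(mem_filter.mp hj).2]
  rw [sum_congr rfl hT, sum_const, nsmul_eq_mul]
  by_cases hcov : ∀ j ∈ S, f j ≠ f i
  · simp only [T, filter_false_of_mem hcov, if_pos hcov]
    norm_num
  · have hTne : (#T : ℝ) ≠ 0 := by
      obtain ⟨j, hj, hji⟩ : ∃ j ∈ S, f j = f i := by simpa using hcov
      exact Nat.cast_ne_zero.mpr (card_ne_zero_of_mem (mem_filter.mpr ⟨hj, hji⟩))
    simp [hTne, hcov]

theorem errSub_blockMatrix (S : Finset (Fin n)) :
    errSub (blockMatrix f) S = #(uncoveredRows f S) := by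
  obtain ⟨x, hx⟩ := exists_eq_card_uncoveredRows (f := f) S
  refine IsLeast.csInf_eq ⟨⟨x, hx.symm⟩, ?_⟩
  rintro e ⟨y, rfl⟩
  exact card_uncoveredRows_le S y

lemma sum_card_uncoveredRows (r : ℕ) :
    ∑ S ∈ powersetCard r univ, #(uncoveredRows f S)
      = ∑ i, (n - #{j | f j = f i}).choose r := by
  refine (sum_card_bipartiteAbove_eq_sum_card_bipartiteBelow
    (fun S i => ∀ j ∈ S, f j ≠ f i)).trans (sum_congr rfl fun i _ => ?_)
  have hbelow : bipartiteBelow (fun S i => ∀ j ∈ S, f j ≠ f i) (powersetCard r univ) i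
      = powersetCard r {j | f j ≠ f i} := by
    ext S
    simp [bipartiteBelow, mem_powersetCard, subset_iff, and_comm]
  rw [hbelow, card_powersetCard, filter_not, card_sdiff_of_subset (filter_subset _ _), card_univ,
    Fintype.card_fin]

end BlockMatrix

lemma card_filter_div_eq {n s q : ℕ} (hs : 0 < s) (hq : (q + 1) * s ≤ n) :
    #{j : Fin n | (j : ℕ) / s = q} = s := by
  have hIco : {m ∈ Iio n | m / s = q} = Ico (q * s) (q * s + s) := by
    ext m
    simp only [mem_filter, mem_Iio, mem_Ico, Nat.div_eq_iff hs]
    rw [add_mul, one_mul] at hq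
    omega
  have hmap : map Fin.valEmbedding {j : Fin n | (j : ℕ) / s = q} = {m ∈ Iio n | m / s = q} := by
    rw [← Fin.map_valEmbedding_univ, filter_map]
    rfl
  rw [← card_map Fin.valEmbedding, hmap, hIco, Nat.card_Ico, Nat.add_sub_cancel_left]

lemma card_filter_div_eq_div {k s n : ℕ} (hn : n = k * s) (i : Fin n) :
    #{j : Fin n | (j : ℕ) / s = i / s} = s := by
  rcases Nat.eq_zero_or_pos s with rfl | hs
  · exact absurd i.2 (by simp [hn])
  have hblock : (i / s : ℕ) < k := (Nat.div_lt_iff_lt_mul hs).mpr (i.2.trans_eq hn)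
  exact card_filter_div_eq hs ((Nat.mul_le_mul_right s hblock).trans_eq hn.symm)

theorem frc_expected_error_uniform_subset_general
    (k s n r : ℕ) (hn : n = k * s) :
    (∑ S ∈ Finset.powersetCard r (Finset.univ : Finset (Fin n)),
        errSub (frcMatrix n s) S) / (n.choose r : ℝ)
    = (n : ℝ) * ((n - s).choose r : ℝ) / (n.choose r : ℝ) := by
  have hfrc : frcMatrix n s = blockMatrix fun i : Fin n => (i : ℕ) / s := rfl
  simp only [hfrc, errSub_blockMatrix]
  rw [← Nat.cast_sum, sum_card_uncoveredRows]
  simp [card_filter_div_eq_div hn]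

theorem frc_expected_error_uniform_subset
    (k s n r : ℕ) (hk : 0 < k) (hs : 0 < s) (hn : n = k * s) (hr : r ≤ n) :
    (∑ S ∈ Finset.powersetCard r (Finset.univ : Finset (Fin n)),
        errSub (frcMatrix n s) S) / (n.choose r : ℝ)
    = (n : ℝ) * ((n - s).choose r : ℝ) / (n.choose r : ℝ) :=
  frc_expected_error_uniform_subset_general k s n r hn
end

section
/- Let n = k·s and let B ∈ ℝ^{n×n} be the FRC encoding matrix. For any subset S ⊆ {1,…,n} with |S| ≥ n − s + 1, the all-ones vector 1_n lies in the column span of the submatrix A_S of B formed by the columns indexed by S; equivalently, err(A_S) := min over x of ‖A_S x − 1_n‖₂² = 0. That is, the FRC scheme is (s−1)-tolerant: the exact gradient is recoverable whenever at most s−1 workers straggle. -/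
/-!
In the FRC matrix the columns within a block are identical, so `1_n` is in the span of the
surviving columns as soon as every block keeps at least one of them: weight each surviving
column by the reciprocal of the number of survivors in its block. A block has `s` columns
while at most `s - 1` are lost, so no block is wiped out.
-/

open Finset

theorem sum_inv_card_fiber_mul_ite {ι β : Type*} [DecidableEq β] (f : ι → β)
    (S : Finset ι) (i : ι) (hi : {j ∈ S | f j = f i}.Nonempty) :
    ∑ j ∈ S, (#{j' ∈ S | f j' = f j} : ℝ)⁻¹ * (if f i = f j then 1 else 0) = 1 := by
  have hfiber : ∀ j ∈ {j ∈ S | f j = f i},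
      (#{j' ∈ S | f j' = f j} : ℝ)⁻¹ = (#{j' ∈ S | f j' = f i} : ℝ)⁻¹ := by
    intro j hj
    rw [(mem_filter.mp hj).2]
  simp_rw [mul_ite, mul_one, mul_zero, eq_comm (a := f i)]
  rw [← sum_filter, sum_congr rfl hfiber, sum_const, nsmul_eq_mul]
  exact mul_inv_cancel₀ (Nat.cast_ne_zero.mpr hi.card_pos.ne')

theorem le_card_filter_div_eq {n s : ℕ} (hsn : s ∣ n) (i : Fin n) :
    s ≤ #{j : Fin n | j.val / s = i.val / s} := by
  set b := (i : ℕ) / s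
  have hb : (b + 1) * s ≤ n := by
    calc (b + 1) * s ≤ n / s * s :=
          Nat.mul_le_mul_right s (Nat.div_lt_div_of_lt_of_dvd hsn i.isLt)
      _ = n := Nat.div_mul_cancel hsn
  have hlt : ∀ m : Fin s, m + b * s < n := fun m => by nlinarith [m.isLt]
  calc s = #(univ : Finset (Fin s)) := by simp
    _ ≤ _ := by
      refine card_le_card_of_injOn (fun m => ⟨m + b * s, hlt m⟩) (fun m _ => ?_) ?_
      · have hs : 0 < s := m.pos
        simp [Nat.add_mul_div_right _ _ hs, Nat.div_eq_of_lt m.isLt]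
      · intro m _ m' _ h
        exact Fin.ext (by simpa using congrArg Fin.val h)

theorem filter_div_eq_nonempty {n s : ℕ} (hsn : s ∣ n) (S : Finset (Fin n))
    (hS : n - s + 1 ≤ #S) (i : Fin n) :
    {j ∈ S | j.val / s = i.val / s}.Nonempty := by
  have hblock := le_card_filter_div_eq hsn i
  have hcard : #(univ : Finset (Fin n)) < #S + #{j : Fin n | j.val / s = i.val / s} := by
    rw [card_univ, Fintype.card_fin]
    omega
  simpa [inter_filter] using
    inter_nonempty_of_card_lt_card_add_card (subset_univ S) (subset_univ _) hcard

theorem errSub_eq_zero_of_exists {n : ℕ} {B : Fin n → Fin n → ℝ} {S : Finset (Fin n)}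
    (h : ∃ x : Fin n → ℝ, ∀ i, ∑ j ∈ S, x j * B i j = 1) : errSub B S = 0 := by
  obtain ⟨x, hx⟩ := h
  have hmem : (0 : ℝ) ∈ {e : ℝ | ∃ x : Fin n → ℝ,
      e = ∑ i : Fin n, ((∑ j ∈ S, x j * B i j) - 1) ^ 2} := ⟨x, by simp [hx]⟩
  have hlb : ∀ e ∈ {e : ℝ | ∃ x : Fin n → ℝ,
      e = ∑ i : Fin n, ((∑ j ∈ S, x j * B i j) - 1) ^ 2}, (0 : ℝ) ≤ e := by
    rintro e ⟨y, rfl⟩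
    exact sum_nonneg fun i _ => sq_nonneg _
  exact le_antisymm (csInf_le ⟨0, hlb⟩ hmem) (le_csInf ⟨0, hmem⟩ hlb)

theorem frc_tolerance_general
    (k s n : ℕ) (hn : n = k * s)
    (S : Finset (Fin n)) (hS : n - s + 1 ≤ S.card) :
    (∃ x : Fin n → ℝ, ∀ i : Fin n,
        (∑ j ∈ S, x j * frcMatrix n s i j) = 1) ∧
    errSub (frcMatrix n s) S = 0 := by
  have hsn : s ∣ n := ⟨k, by rw [hn, mul_comm]⟩
  have hsol : ∃ x : Fin n → ℝ, ∀ i : Fin n, (∑ j ∈ S, x j * frcMatrix n s i j) = 1 :=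
    ⟨fun j => (#{j' ∈ S | j'.val / s = j.val / s} : ℝ)⁻¹, fun i =>
      sum_inv_card_fiber_mul_ite (fun j : Fin n => (j : ℕ) / s) S i
        (filter_div_eq_nonempty hsn S hS i)⟩
  exact ⟨hsol, errSub_eq_zero_of_exists hsol⟩

theorem frc_tolerance
    (k s n : ℕ) (hk : 0 < k) (hs : 0 < s) (hn : n = k * s)
    (S : Finset (Fin n)) (hS : n - s + 1 ≤ S.card) :
    (∃ x : Fin n → ℝ, ∀ i : Fin n,
        (∑ j ∈ S, x j * frcMatrix n s i j) = 1) ∧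
    errSub (frcMatrix n s) S = 0 :=
  frc_tolerance_general k s n hn S hS
end

section
/- Let B ∈ ℝ^{n×n} be a circulant matrix, i.e., B(i,j) = c((i−j) mod n) for some vector c ∈ ℝ^n, so that each column of B is the cyclic shift by one position of the previous column. For v ∈ {0,1}^n, let A_v denote the submatrix of B formed by the columns j with v_j = 1, and let err(A_v) := min over x of ‖A_v x − 1_n‖₂². Let σ(v) denote the cyclic shift of v by one position. Then err(A_{σ(v)}) = err(A_v); consequently err(A_v) is constant on each cycle class (orbit of the cyclic-shift action) of {0,1}^n. -/
/-- `err(A_v) = min_{x} ‖A_v x − 1_n‖₂²` where `A_v` is the submatrix of `B`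
formed by the columns `j` with `v j = true`. -/
noncomputable def errCols {n : ℕ} (B : Fin n → Fin n → ℝ) (v : Fin n → Bool) : ℝ :=
  sInf {e : ℝ | ∃ x : Fin n → ℝ,
    e = ∑ i : Fin n,
      ((∑ j ∈ Finset.univ.filter (fun j => v j = true), x j * B i j) - 1) ^ 2}

/-- The cyclic shift by one position: `σ(v)_j = v_{j−1}` (indices mod `n`),
i.e. `(v_1, …, v_n) ↦ (v_n, v_1, …, v_{n−1})`. -/
def cycShift (n : ℕ) [NeZero n] (v : Fin n → Bool) : Fin n → Bool :=
  fun j => v (j - 1)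

/-!
A circulant matrix is invariant under the simultaneous translation `(i, j) ↦ (i + 1, j + 1)`
of row and column indices. Hence shifting the column selector by one changes the residual
`‖A_v x − 1‖²` only by relabelling the coefficients `x` and permuting its rows, so the two
least-squares problems have the same set of attainable values and the same infimum.
-/

open Finset

section Translation

variable {G : Type*} [AddCommGroup G] [Fintype G]

def decodingLoss (B : G → G → ℝ) (v : G → Bool) (x : G → ℝ) : ℝ :=
  ∑ i, ((∑ j ∈ univ.filter (fun j => v j = true), x j * B i j) - 1) ^ 2

lemma sum_filter_sub_translate (v : G → Bool) (f : G → ℝ) (a : G) :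
    ∑ j ∈ univ.filter (fun j => v (j - a) = true), f j
      = ∑ j ∈ univ.filter (fun j => v j = true), f (j + a) := by
  rw [sum_filter, sum_filter,
    ← (Equiv.subRight a).sum_comp (fun j => if v j = true then f (j + a) else 0)]
  simp only [Equiv.subRight_apply, sub_add_cancel]

lemma decodingLoss_translate (B : G → G → ℝ) (a : G)
    (hB : ∀ i j, B (i + a) (j + a) = B i j) (v : G → Bool) (x : G → ℝ) :
    decodingLoss B (fun j => v (j - a)) x = decodingLoss B v (fun j => x (j + a)) := by
  refine (Equiv.sum_comp (Equiv.addRight a) _).symm.trans ?_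
  simp only [decodingLoss, Equiv.coe_addRight, sum_filter_sub_translate, hB]

end Translation

lemma errCols_eq_sInf_range {n : ℕ} (B : Fin n → Fin n → ℝ) (v : Fin n → Bool) :
    errCols B v = sInf (Set.range (decodingLoss B v)) := by
  simp only [errCols, decodingLoss, Set.range, eq_comm]

lemma errCols_cycShift {n : ℕ} [NeZero n] (B : Fin n → Fin n → ℝ)
    (hB : ∀ i j, B (i + 1) (j + 1) = B i j) (v : Fin n → Bool) :
    errCols B (cycShift n v) = errCols B v := by
  have hloss : decodingLoss B (cycShift n v) = decodingLoss B v ∘ fun x j => x (j + 1) :=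
    funext (decodingLoss_translate B 1 hB v)
  have hsurj : Function.Surjective fun (x : Fin n → ℝ) j => x (j + 1) :=
    fun y => ⟨fun j => y (j - 1), by simp⟩
  rw [errCols_eq_sInf_range, errCols_eq_sInf_range, hloss, hsurj.range_comp]

theorem circulant_error_shift_invariant
    (n : ℕ) [NeZero n] (B : Fin n → Fin n → ℝ) (c : Fin n → ℝ)
    (hB : ∀ i j : Fin n, B i j = c (i - j)) (v : Fin n → Bool) :
    errCols B (cycShift n v) = errCols B v ∧
    ∀ k : ℕ, errCols B ((cycShift n)^[k] v) = errCols B v := by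
  have hshift : ∀ i j, B (i + 1) (j + 1) = B i j := fun i j => by
    rw [hB, hB, add_sub_add_right_eq_sub]
  have hsemiconj : Function.Semiconj (errCols B) (cycShift n) id :=
    errCols_cycShift B hshift
  exact ⟨hsemiconj v, fun k => by simpa using hsemiconj.iterate_right k v⟩
end

section
/- Let n ≥ 1 and let σ be the cyclic-shift map on the set {0,1}^n (equivalently 𝔽₂ⁿ) of binary vectors of length n. For r ∈ {0,…,n} and a divisor e of n, let N(r,e) be the number of orbits of the cyclic group ⟨σ⟩ acting on {0,1}^n that have cardinality exactly e and consist of vectors of Hamming weight r. Then N(r,e) equals the coefficient of x^r in the polynomial R_e(x) = (1/e) · Σ_{d | e} μ(e/d) · (1 + x^{n/d})^d, where μ is the Möbius function. -/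
/-! A vector fixed by `σ^d`, for `d ∣ n`, is the periodic extension of an arbitrary word of
length `d`, and its weight is `n / d` times the weight of that word; so the weight enumerator of
the `σ^d`-fixed vectors is `(1 + x^(n/d))^d`. A vector is fixed by `σ^d` iff its minimal period
divides `d`, so these enumerators are divisor sums of the enumerators of the vectors of exact
minimal period, and Möbius inversion recovers the latter as
`Σ_{d ∣ e} μ(e/d) (1 + x^(n/d))^d`. Finally an orbit of order `e` consists of exactly `e`
vectors, all of the same weight, which accounts for the factor `1/e`. -/

open Polynomial

/-- Hamming weight of `v ∈ {0,1}^n`. -/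
def hWeight {n : ℕ} (v : Fin n → Bool) : ℕ :=
  (Finset.univ.filter (fun j => v j = true)).card

/-- The cycle class (orbit under the cyclic-shift action) of `v`. -/
def cycOrbit (n : ℕ) [NeZero n] (v : Fin n → Bool) : Finset (Fin n → Bool) :=
  (Finset.range n).image (fun k => (cycShift n)^[k] v)

/-- `N(r,e)`: the number of distinct cycle classes (orbits of the cyclic-shift
action on `{0,1}^n`) of Hamming weight `r` and order (cardinality) `e`. -/
def numCycleClasses (n : ℕ) [NeZero n] (r e : ℕ) : ℕ :=
  (Finset.image (cycOrbit n)
    (Finset.univ.filter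
      (fun v : Fin n → Bool => hWeight v = r ∧ (cycOrbit n v).card = e))).card

open Finset Function

theorem Function.Periodic.sum_range_mul {M : Type*} [AddCommMonoid M] {f : ℕ → M} {d : ℕ}
    (hf : Periodic f d) (m : ℕ) : ∑ k ∈ range (d * m), f k = m • ∑ k ∈ range d, f k := by
  induction m with
  | zero => simp
  | succ m ih =>
    rw [Nat.mul_succ, sum_range_add, ih, succ_nsmul]
    congr 1
    exact sum_congr rfl fun k _ => by simpa [add_comm, mul_comm] using hf.nat_mul m k

theorem Finset.card_filter_iterate_eq_self {α : Type*} [DecidableEq α] (f : α → α)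
    (s : Finset α) {d : ℕ} (hd : 0 < d) :
    #{x ∈ s | f^[d] x = x} = ∑ c ∈ d.divisors, #{x ∈ s | minimalPeriod f x = c} := by
  rw [card_eq_sum_card_fiberwise (s := {x ∈ s | f^[d] x = x}) (f := minimalPeriod f) fun x hx =>
    Nat.mem_divisors.2 ⟨isPeriodicPt_iff_minimalPeriod_dvd.1 (mem_filter.1 hx).2, hd.ne'⟩]
  refine sum_congr rfl fun c hc => ?_
  rw [filter_filter]
  refine congrArg card (filter_congr fun x _ => ?_)
  constructor
  · exact fun h => h.2
  · rintro rfl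
    exact ⟨isPeriodicPt_iff_minimalPeriod_dvd.2 (Nat.dvd_of_mem_divisors hc), rfl⟩

theorem Polynomial.coeff_sum_X_pow {R ι : Type*} [Semiring R] (s : Finset ι) (k : ι → ℕ)
    (r : ℕ) : (∑ i ∈ s, (X : R[X]) ^ k i).coeff r = #{i ∈ s | k i = r} := by
  simp [finsetSum_coeff, coeff_X_pow, eq_comm]

open scoped ArithmeticFunction.Moebius in
theorem ArithmeticFunction.sum_divisors_moebius_mul_sum_divisors {R : Type*} [Ring R]
    (f : ℕ → R) {e : ℕ} (he : 0 < e) :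
    ∑ d ∈ e.divisors, (μ (e / d) : R) * ∑ c ∈ d.divisors, f c = f e := by
  rw [← Nat.sum_divisorsAntidiagonal' fun a b => (μ a : R) * ∑ c ∈ b.divisors, f c]
  exact sum_eq_iff_sum_mul_moebius_eq.1 (fun _ _ => rfl) e he

section CyclicShift

open Fin.NatCast

theorem hWeight_comp_equiv {n : ℕ} (v : Fin n → Bool) (e : Equiv.Perm (Fin n)) :
    hWeight (v ∘ e) = hWeight v :=
  card_equiv e fun j => by simp

theorem sum_pow_hWeight {R : Type*} [CommSemiring R] (d : ℕ) (a : R) :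
    ∑ w : Fin d → Bool, a ^ hWeight w = (1 + a) ^ d := by
  have (w : Fin d → Bool) : a ^ hWeight w = ∏ i, if w i = true then a else 1 := by
    rw [prod_ite, prod_const, prod_const_one, mul_one, hWeight]
  simp_rw [this]
  rw [← Fintype.prod_sum fun _ b => if b = true then a else 1]
  simp [add_comm]

variable {n : ℕ} [NeZero n]

theorem cycShift_iterate_apply (k : ℕ) (v : Fin n → Bool) (j : Fin n) :
    (cycShift n)^[k] v j = v (j - k) := by
  induction k generalizing j with
  | zero => simp
  | succ k ih =>
    rw [iterate_succ_apply', cycShift, ih, Nat.cast_succ, sub_sub, add_comm]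

theorem hWeight_cycShift_iterate (k : ℕ) (v : Fin n → Bool) :
    hWeight ((cycShift n)^[k] v) = hWeight v := by
  rw [← hWeight_comp_equiv v (Equiv.subRight (k : Fin n))]
  exact congrArg hWeight (funext (cycShift_iterate_apply k v))

theorem isPeriodicPt_cycShift (v : Fin n → Bool) : IsPeriodicPt (cycShift n) n v :=
  funext fun j => by simp [cycShift_iterate_apply]

theorem mem_cycOrbit {v w : Fin n → Bool} :
    w ∈ cycOrbit n v ↔ ∃ k, (cycShift n)^[k] v = w := by
  refine ⟨fun h => ?_, fun ⟨k, hk⟩ => ?_⟩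
  · obtain ⟨k, -, hk⟩ := mem_image.1 h
    exact ⟨k, hk⟩
  · exact mem_image.2 ⟨k % n, mem_range.2 (Nat.mod_lt _ n.pos_of_neZero),
      ((isPeriodicPt_cycShift v).iterate_mod_apply k).trans hk⟩

theorem self_mem_cycOrbit (v : Fin n → Bool) : v ∈ cycOrbit n v :=
  mem_cycOrbit.2 ⟨0, rfl⟩

theorem card_cycOrbit (v : Fin n → Bool) :
    #(cycOrbit n v) = minimalPeriod (cycShift n) v := by
  have horbit : cycOrbit n v =
      (range (minimalPeriod (cycShift n) v)).image ((cycShift n)^[·] v) := by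
    ext w
    rw [mem_cycOrbit, mem_image]
    refine ⟨fun ⟨k, hk⟩ => ⟨k % _, mem_range.2 (Nat.mod_lt _ ?_), ?_⟩, fun ⟨k, _, hk⟩ => ⟨k, hk⟩⟩
    · exact (isPeriodicPt_cycShift v).minimalPeriod_pos n.pos_of_neZero
    · rw [iterate_mod_minimalPeriod_eq, hk]
  rw [horbit, card_image_of_injOn (by simpa using iterate_injOn_Iio_minimalPeriod), card_range]

theorem cycOrbit_cycShift_iterate (k : ℕ) (v : Fin n → Bool) :
    cycOrbit n ((cycShift n)^[k] v) = cycOrbit n v := by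
  refine eq_of_subset_of_card_le (fun w hw => ?_) ?_
  · obtain ⟨j, rfl⟩ := mem_cycOrbit.1 hw
    exact mem_cycOrbit.2 ⟨j + k, iterate_add_apply ..⟩
  · rw [card_cycOrbit, card_cycOrbit, minimalPeriod_apply_iterate
      (mk_mem_periodicPts n.pos_of_neZero (isPeriodicPt_cycShift v))]

theorem card_filter_minimalPeriod_cycShift (r e : ℕ) :
    #{v : Fin n → Bool | hWeight v = r ∧ minimalPeriod (cycShift n) v = e}
      = numCycleClasses n r e * e := by
  simp_rw [← card_cycOrbit]
  rw [numCycleClasses, card_eq_sum_card_image (cycOrbit n), sum_const_nat]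
  intro _ hO
  obtain ⟨v, hv, rfl⟩ := mem_image.1 hO
  rw [← (mem_filter.1 hv).2.2]
  congr 1
  ext w
  simp only [mem_filter, mem_univ, true_and]
  refine ⟨fun hw => hw.2 ▸ self_mem_cycOrbit w, fun hw => ?_⟩
  obtain ⟨k, rfl⟩ := mem_cycOrbit.1 hw
  rw [hWeight_cycShift_iterate, cycOrbit_cycShift_iterate]
  exact ⟨⟨(mem_filter.1 hv).2.1, rfl⟩, rfl⟩

end CyclicShift

section PeriodicExtension

open Fin.NatCast

variable {n d : ℕ} [NeZero d]

def periodicExtension (n : ℕ) (w : Fin d → Bool) : Fin n → Bool :=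
  fun j => w (j.val : Fin d)

theorem periodicExtension_castLE (hdn : d ≤ n) (w : Fin d → Bool) (i : Fin d) :
    periodicExtension n w (Fin.castLE hdn i) = w i := by
  simp [periodicExtension]

theorem periodicExtension_injective (hdn : d ≤ n) :
    Injective (periodicExtension n : (Fin d → Bool) → Fin n → Bool) := fun w w' h =>
  funext fun i => by
    simpa [periodicExtension_castLE] using congrFun h (Fin.castLE hdn i)

theorem hWeight_periodicExtension (hd : d ∣ n) (w : Fin d → Bool) :
    hWeight (periodicExtension n w) = n / d * hWeight w := by
  let g : ℕ → ℕ := fun k => if w (k : Fin d) = true then 1 else 0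
  have hg : Periodic g d := fun k => by simp [g]
  calc hWeight (periodicExtension n w) = ∑ k ∈ range n, g k := by
        rw [hWeight, card_filter, ← Fin.sum_univ_eq_sum_range]
        rfl
    _ = n / d * ∑ k ∈ range d, g k := by
        rw [← smul_eq_mul, ← hg.sum_range_mul, Nat.mul_div_cancel' hd]
    _ = n / d * hWeight w := by
        rw [hWeight, card_filter, ← Fin.sum_univ_eq_sum_range]
        simp [g]

variable [NeZero n]

theorem natCast_val_sub_natCast (hd : d ∣ n) (j : Fin n) :
    (((j - d : Fin n) : ℕ) : Fin d) = ((j : ℕ) : Fin d) := by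
  obtain ⟨c, hc⟩ : d ∣ n - d % n := Nat.dvd_sub hd ((Nat.dvd_mod_iff hd).2 dvd_rfl)
  ext
  rw [Fin.val_natCast, Fin.val_natCast, Fin.val_sub, Fin.val_natCast, Nat.mod_mod_of_dvd _ hd,
    hc, Nat.mul_add_mod]

theorem cycShift_iterate_eq_self_iff (hd : d ∣ n) {v : Fin n → Bool} :
    (cycShift n)^[d] v = v ↔ ∃ w : Fin d → Bool, periodicExtension n w = v := by
  have hdn : d ≤ n := Nat.le_of_dvd n.pos_of_neZero hd
  constructor
  · intro h
    refine ⟨fun i => v (Fin.castLE hdn i), funext fun j => ?_⟩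
    have hq : d * (j / d) ≤ j := Nat.mul_div_le j d
    have hcast : (((d * (j / d) : ℕ) : Fin n) : ℕ) = d * (j / d) := by
      rw [Fin.val_natCast, Nat.mod_eq_of_lt (hq.trans_lt j.isLt)]
    calc v (Fin.castLE hdn (j.val : Fin d))
        = v (j - (d * (j / d) : ℕ)) := by
          congr 1
          ext
          rw [Fin.val_castLE, Fin.val_natCast, Nat.mod_eq_sub_mul_div,
            Fin.coe_sub_iff_le.2 (by rwa [Fin.le_def, hcast]), hcast]
      _ = v j := by
          rw [← cycShift_iterate_apply (d * (j / d)) v j]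
          exact congrFun ((show IsPeriodicPt (cycShift n) d v from h).mul_const _) j
  · rintro ⟨w, rfl⟩
    funext j
    rw [cycShift_iterate_apply]
    exact congrArg w (natCast_val_sub_natCast hd j)

end PeriodicExtension

theorem sum_X_pow_hWeight_of_iterate_cycShift_eq_self {R : Type*} [CommSemiring R] {n d : ℕ}
    [NeZero n] [NeZero d] (hd : d ∣ n) :
    ∑ v : Fin n → Bool with (cycShift n)^[d] v = v, (X : R[X]) ^ hWeight v
      = (1 + X ^ (n / d)) ^ d := by
  have hfixed : ({v | (cycShift n)^[d] v = v} : Finset (Fin n → Bool))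
      = univ.image (periodicExtension n (d := d)) := by
    ext v
    simp [cycShift_iterate_eq_self_iff hd]
  rw [hfixed, sum_image fun w _ w' _ h =>
    periodicExtension_injective (Nat.le_of_dvd n.pos_of_neZero hd) h]
  simp_rw [hWeight_periodicExtension hd, pow_mul]
  exact sum_pow_hWeight d _

theorem coeff_one_add_X_pow_pow {R : Type*} [CommSemiring R] {n d : ℕ} [NeZero n]
    (hd : d ∣ n) (r : ℕ) :
    ((1 + X ^ (n / d)) ^ d : R[X]).coeff r
      = #{v : Fin n → Bool | hWeight v = r ∧ (cycShift n)^[d] v = v} := by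
  have : NeZero d := NeZero.of_pos (Nat.pos_of_dvd_of_pos hd n.pos_of_neZero)
  rw [← sum_X_pow_hWeight_of_iterate_cycShift_eq_self hd, Polynomial.coeff_sum_X_pow,
    filter_filter]
  simp_rw [and_comm]

theorem cycle_class_count_general
    (n : ℕ) [NeZero n] (r e : ℕ) (he0 : 0 < e) (hen : e ∣ n) :
    (numCycleClasses n r e : ℚ)
    = (Polynomial.C ((e : ℚ)⁻¹) *
        ∑ d ∈ e.divisors,
          Polynomial.C ((ArithmeticFunction.moebius (e / d) : ℤ) : ℚ) *
            (1 + Polynomial.X ^ (n / d)) ^ d).coeff r := by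
  set weightR : Finset (Fin n → Bool) := {v | hWeight v = r}
  have hfixed (d : ℕ) (hd : d ∈ e.divisors) : ((1 + X ^ (n / d)) ^ d : ℚ[X]).coeff r
      = ∑ c ∈ d.divisors, (#{v ∈ weightR | minimalPeriod (cycShift n) v = c} : ℚ) := by
    rw [coeff_one_add_X_pow_pow ((Nat.dvd_of_mem_divisors hd).trans hen), ← filter_filter,
      card_filter_iterate_eq_self _ _ (Nat.pos_of_mem_divisors hd)]
    push_cast
    rfl
  simp_rw [coeff_C_mul, finsetSum_coeff, coeff_C_mul]
  rw [sum_congr rfl fun d hd => congrArg _ (hfixed d hd),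
    ArithmeticFunction.sum_divisors_moebius_mul_sum_divisors _ he0, filter_filter,
    card_filter_minimalPeriod_cycShift]
  push_cast
  field_simp

theorem cycle_class_count
    (n : ℕ) [NeZero n] (r e : ℕ) (he0 : 0 < e) (hen : e ∣ n) (hr : r ≤ n) :
    (numCycleClasses n r e : ℚ)
    = (Polynomial.C ((e : ℚ)⁻¹) *
        ∑ d ∈ e.divisors,
          Polynomial.C ((ArithmeticFunction.moebius (e / d) : ℤ) : ℚ) *
            (1 + Polynomial.X ^ (n / d)) ^ d).coeff r :=
  cycle_class_count_general n r e he0 hen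
end
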